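/- arXiv:0809.1605 — 2 statements merged into one kernel-verified Lean document; each statement's English description precedes it below -/
import Mathlib

section
/- The quantity D'(X,Y) = 1 - I(X,Y)/max{H(X),H(Y)} is a pseudometric on random variables with positive entropies: for all X, Y, Z taking finitely many values on a common probability space with H(X), H(Y), H(Z) all positive, one has D'(X,Y) ≥ 0, D'(X,X) = 0, D'(X,Y) = D'(Y,X), D'(X,Y) ≤ 1, and the triangle inequality D'(X,Z) ≤ D'(X,Y) + D'(Y,Z); equivalently D'(X,Y) = max{H(X|Y),H(Y|X)}/max{H(X),H(Y)}. -/
open MeasureTheory ProbabilityTheory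

/-- Shannon entropy of a random variable `X` taking values in a finite type `S`. -/
noncomputable def shEntropy {Ω : Type*} [MeasurableSpace Ω] (μ : Measure Ω)
    {S : Type*} [Fintype S] (X : Ω → S) : ℝ :=
  ∑ s : S, Real.negMulLog (μ (X ⁻¹' {s})).toReal

/-- Conditional entropy `H(X|Y) = H(X,Y) - H(Y)`. -/
noncomputable def shCondEntropy {Ω : Type*} [MeasurableSpace Ω] (μ : Measure Ω)
    {S T : Type*} [Fintype S] [Fintype T] (X : Ω → S) (Y : Ω → T) : ℝ :=
  shEntropy μ (fun ω => (X ω, Y ω)) - shEntropy μ Y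

/-- Mutual information `I(X,Y) = H(X) + H(Y) - H(X,Y)`. -/
noncomputable def shMI {Ω : Type*} [MeasurableSpace Ω] (μ : Measure Ω)
    {S T : Type*} [Fintype S] [Fintype T] (X : Ω → S) (Y : Ω → T) : ℝ :=
  shEntropy μ X + shEntropy μ Y - shEntropy μ (fun ω => (X ω, Y ω))

/-- The normalized information distance `D(X,Y) = 1 - I(X,Y)/H(X,Y)`. -/
noncomputable def normDist {Ω : Type*} [MeasurableSpace Ω] (μ : Measure Ω)
    {S T : Type*} [Fintype S] [Fintype T] (X : Ω → S) (Y : Ω → T) : ℝ :=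
  1 - shMI μ X Y / shEntropy μ (fun ω => (X ω, Y ω))

/-- The normalized information distance `D'(X,Y) = 1 - I(X,Y)/max{H(X),H(Y)}`. -/
noncomputable def normDist' {Ω : Type*} [MeasurableSpace Ω] (μ : Measure Ω)
    {S T : Type*} [Fintype S] [Fintype T] (X : Ω → S) (Y : Ω → T) : ℝ :=
  1 - shMI μ X Y / max (shEntropy μ X) (shEntropy μ Y)

section Aux
open Real Finset

lemma aux_negMulLog_sum_le {ι : Type*} (s : Finset ι) (p : ι → ℝ) (hp : ∀ i ∈ s, 0 ≤ p i) :
    negMulLog (∑ i ∈ s, p i) ≤ ∑ i ∈ s, negMulLog (p i) := by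
  have h1 : negMulLog (∑ i ∈ s, p i) = ∑ i ∈ s, -(p i * log (∑ j ∈ s, p j)) := by
    rw [Finset.sum_neg_distrib, ← Finset.sum_mul, negMulLog, neg_mul]
  rw [h1]
  refine Finset.sum_le_sum fun i hi => ?_
  rcases eq_or_lt_of_le (hp i hi) with h | h
  · simp [← h]
  · have hle : p i ≤ ∑ j ∈ s, p j := Finset.single_le_sum hp hi
    have := Real.log_le_log (by exact h) hle
    simp only [negMulLog, neg_mul, neg_le_neg_iff]
    exact mul_le_mul_of_nonneg_left this h.le

lemma aux_gibbs {ι : Type*} (s : Finset ι) (p q : ι → ℝ)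
    (hp : ∀ i ∈ s, 0 ≤ p i) (hq : ∀ i ∈ s, 0 ≤ q i)
    (h0 : ∀ i ∈ s, q i = 0 → p i = 0)
    (hsum : ∑ i ∈ s, q i ≤ ∑ i ∈ s, p i) :
    ∑ i ∈ s, negMulLog (p i) ≤ ∑ i ∈ s, -(p i * log (q i)) := by
  have key : ∀ i ∈ s, negMulLog (p i) - -(p i * log (q i)) ≤ q i - p i := by
    intro i hi
    rcases eq_or_lt_of_le (hp i hi) with h | h
    · simp [← h, hq i hi]
    · have hqpos : 0 < q i := by
        rcases eq_or_lt_of_le (hq i hi) with h' | h'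
        · exact absurd (h0 i hi h'.symm) (by linarith)
        · exact h'
      have hlog := Real.log_le_sub_one_of_pos (div_pos hqpos h)
      rw [Real.log_div hqpos.ne' h.ne'] at hlog
      have := mul_le_mul_of_nonneg_left hlog h.le
      have hrw : p i * (q i / p i - 1) = q i - p i := by field_simp
      rw [hrw] at this
      simp only [negMulLog, neg_mul]
      nlinarith
  have h2 : ∑ i ∈ s, (negMulLog (p i) - -(p i * log (q i))) ≤ ∑ i ∈ s, (q i - p i) :=
    Finset.sum_le_sum key
  rw [Finset.sum_sub_distrib, Finset.sum_sub_distrib] at h2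
  linarith

variable {Ω : Type*} [MeasurableSpace Ω] {μ : Measure Ω} [IsProbabilityMeasure μ]

lemma aux_partition {ι : Type*} (s : Finset ι) (g : ι → Set Ω) (E : Set Ω)
    (hE : E = ⋃ i ∈ s, g i)
    (hd : (s : Set ι).PairwiseDisjoint g)
    (hm : ∀ i ∈ s, MeasurableSet (g i)) :
    (μ E).toReal = ∑ i ∈ s, (μ (g i)).toReal := by
  rw [hE, measure_biUnion_finset hd hm, ENNReal.toReal_sum (fun i _ => measure_ne_top μ _)]

variable {A B : Type*} [Fintype A] [Fintype B]
  [MeasurableSpace A] [MeasurableSingletonClass A]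
  [MeasurableSpace B] [MeasurableSingletonClass B]

lemma aux_sum_one (V : Ω → A) (hV : Measurable V) :
    ∑ a : A, (μ (V ⁻¹' {a})).toReal = 1 := by
  rw [← aux_partition Finset.univ _ Set.univ ?_ ?_ ?_]
  · simp
  · ext ω; simp
  · intro a _ b _ hab
    simp only [Function.onFun, Set.disjoint_left]
    intro ω h1 h2
    exact hab ((Set.mem_preimage.1 h1).symm.trans (Set.mem_preimage.1 h2))
  · exact fun a _ => hV (measurableSet_singleton a)

lemma aux_marg_fst (V : Ω → A) (W : Ω → B) (hV : Measurable V) (hW : Measurable W) (a : A) :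
    (μ (V ⁻¹' {a})).toReal = ∑ b : B, (μ ((fun ω => (V ω, W ω)) ⁻¹' {(a, b)})).toReal := by
  refine aux_partition Finset.univ _ _ ?_ ?_ ?_
  · ext ω
    simp only [Set.mem_preimage, Set.mem_singleton_iff, Set.mem_iUnion, Prod.mk.injEq,
      Finset.mem_univ, exists_true_left, true_and]
    constructor
    · intro h; exact ⟨W ω, h, rfl⟩
    · rintro ⟨b, h, -⟩; exact h
  · intro b _ b' _ hbb'
    simp only [Function.onFun, Set.disjoint_left]
    intro ω h1 h2
    simp only [Set.mem_preimage, Set.mem_singleton_iff, Prod.mk.injEq] at h1 h2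
    exact hbb' (h1.2.symm.trans h2.2)
  · exact fun b _ => (hV.prodMk hW) (measurableSet_singleton _)

lemma aux_marg_snd (V : Ω → A) (W : Ω → B) (hV : Measurable V) (hW : Measurable W) (b : B) :
    (μ (W ⁻¹' {b})).toReal = ∑ a : A, (μ ((fun ω => (V ω, W ω)) ⁻¹' {(a, b)})).toReal := by
  refine aux_partition Finset.univ _ _ ?_ ?_ ?_
  · ext ω
    simp only [Set.mem_preimage, Set.mem_singleton_iff, Set.mem_iUnion, Prod.mk.injEq,
      Finset.mem_univ, exists_true_left, true_and]
    constructor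
    · intro h; exact ⟨V ω, rfl, h⟩
    · rintro ⟨a, -, h⟩; exact h
  · intro a _ a' _ haa'
    simp only [Function.onFun, Set.disjoint_left]
    intro ω h1 h2
    simp only [Set.mem_preimage, Set.mem_singleton_iff, Prod.mk.injEq] at h1 h2
    exact haa' (h1.1.symm.trans h2.1)
  · exact fun a _ => (hV.prodMk hW) (measurableSet_singleton _)

lemma aux_toReal_le_one (E : Set Ω) : (μ E).toReal ≤ 1 := by
  have := ENNReal.toReal_mono (by simp) (prob_le_one (μ := μ) (s := E))
  simpa using this

lemma aux_entropy_nonneg (V : Ω → A) : 0 ≤ shEntropy μ V := by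
  refine Finset.sum_nonneg fun a _ => negMulLog_nonneg ENNReal.toReal_nonneg ?_
  exact aux_toReal_le_one _

lemma aux_comp_le [DecidableEq B] (V : Ω → A) (hV : Measurable V) (f : A → B) :
    shEntropy μ (fun ω => f (V ω)) ≤ shEntropy μ V := by
  unfold shEntropy
  rw [← Finset.sum_fiberwise Finset.univ f (fun a => negMulLog (μ (V ⁻¹' {a})).toReal)]
  refine Finset.sum_le_sum fun b _ => ?_
  have hfb : ((fun ω => f (V ω)) ⁻¹' {b}) = ⋃ a ∈ Finset.univ.filter (fun a => f a = b), V ⁻¹' {a} := by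
    ext ω
    simp only [Set.mem_preimage, Set.mem_singleton_iff, Set.mem_iUnion, Finset.mem_filter,
      Finset.mem_univ, true_and]
    constructor
    · intro h; exact ⟨V ω, h, rfl⟩
    · rintro ⟨a, h, rfl⟩; exact h
  have hmeas : (μ ((fun ω => f (V ω)) ⁻¹' {b})).toReal
      = ∑ a ∈ Finset.univ.filter (fun a => f a = b), (μ (V ⁻¹' {a})).toReal := by
    refine aux_partition _ _ _ hfb ?_ ?_
    · intro a _ a' _ haa'
      simp only [Function.onFun, Set.disjoint_left]
      intro ω h1 h2
      exact haa' ((Set.mem_preimage.1 h1).symm.trans (Set.mem_preimage.1 h2))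
    · exact fun a _ => hV (measurableSet_singleton a)
  rw [hmeas]
  exact aux_negMulLog_sum_le _ _ (fun a _ => ENNReal.toReal_nonneg)

end Aux

set_option linter.unusedSectionVars false

section Aux2
open Real Finset MeasureTheory ProbabilityTheory

variable {Ω : Type*} [MeasurableSpace Ω] {μ : Measure Ω} [IsProbabilityMeasure μ]
variable {A B : Type*} [Fintype A] [Fintype B]
  [MeasurableSpace A] [MeasurableSingletonClass A]
  [MeasurableSpace B] [MeasurableSingletonClass B]

lemma aux_le_marg_fst (V : Ω → A) (W : Ω → B) (a : A) (b : B) :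
    (μ ((fun ω => (V ω, W ω)) ⁻¹' {(a, b)})).toReal ≤ (μ (V ⁻¹' {a})).toReal := by
  refine ENNReal.toReal_mono (measure_ne_top μ _) (measure_mono ?_)
  intro ω h
  simp only [Set.mem_preimage, Set.mem_singleton_iff, Prod.mk.injEq] at h ⊢
  exact h.1

lemma aux_le_marg_snd (V : Ω → A) (W : Ω → B) (a : A) (b : B) :
    (μ ((fun ω => (V ω, W ω)) ⁻¹' {(a, b)})).toReal ≤ (μ (W ⁻¹' {b})).toReal := by
  refine ENNReal.toReal_mono (measure_ne_top μ _) (measure_mono ?_)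
  intro ω h
  simp only [Set.mem_preimage, Set.mem_singleton_iff, Prod.mk.injEq] at h ⊢
  exact h.2

lemma aux_pair_le (V : Ω → A) (W : Ω → B) (hV : Measurable V) (hW : Measurable W) :
    shEntropy μ (fun ω => (V ω, W ω)) ≤ shEntropy μ V + shEntropy μ W := by
  classical
  set P : A × B → ℝ := fun c => (μ ((fun ω => (V ω, W ω)) ⁻¹' {c})).toReal with hPdef
  set pA : A → ℝ := fun a => (μ (V ⁻¹' {a})).toReal with hpAdef
  set pB : B → ℝ := fun b => (μ (W ⁻¹' {b})).toReal with hpBdef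
  have hPnn : ∀ c : A × B, 0 ≤ P c := fun c => ENNReal.toReal_nonneg
  have hPA : ∀ c : A × B, P c ≤ pA c.1 := fun c => aux_le_marg_fst V W c.1 c.2
  have hPB : ∀ c : A × B, P c ≤ pB c.2 := fun c => aux_le_marg_snd V W c.1 c.2
  have key := aux_gibbs Finset.univ P (fun c => pA c.1 * pB c.2)
    (fun c _ => hPnn c)
    (fun c _ => mul_nonneg ENNReal.toReal_nonneg ENNReal.toReal_nonneg)
    ?_ ?_
  · have hRHS : ∑ c : A × B, -(P c * log (pA c.1 * pB c.2))
        = shEntropy μ V + shEntropy μ W := by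
      have hsplit : ∀ c : A × B, -(P c * log (pA c.1 * pB c.2))
          = -(P c * log (pA c.1)) + -(P c * log (pB c.2)) := by
        intro c
        rcases eq_or_lt_of_le (hPnn c) with h | h
        · simp [← h]
        · have h1 : 0 < pA c.1 := lt_of_lt_of_le h (hPA c)
          have h2 : 0 < pB c.2 := lt_of_lt_of_le h (hPB c)
          rw [Real.log_mul h1.ne' h2.ne']
          ring
      rw [Finset.sum_congr rfl (fun c _ => hsplit c), Finset.sum_add_distrib]
      congr 1
      · rw [Fintype.sum_prod_type]
        unfold shEntropy
        refine Finset.sum_congr rfl fun a _ => ?_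
        have : ∑ b : B, -(P (a, b) * log (pA a)) = -((∑ b : B, P (a, b)) * log (pA a)) := by
          rw [Finset.sum_neg_distrib, ← Finset.sum_mul]
        rw [this, ← aux_marg_fst V W hV hW a, negMulLog, neg_mul]
      · rw [Fintype.sum_prod_type, Finset.sum_comm]
        unfold shEntropy
        refine Finset.sum_congr rfl fun b _ => ?_
        have : ∑ a : A, -(P (a, b) * log (pB b)) = -((∑ a : A, P (a, b)) * log (pB b)) := by
          rw [Finset.sum_neg_distrib, ← Finset.sum_mul]
        rw [this, ← aux_marg_snd V W hV hW b, negMulLog, neg_mul]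
    rw [hRHS] at key
    exact key
  · intro c _ h
    rcases mul_eq_zero.1 h with h' | h'
    · exact le_antisymm (by rw [← h']; exact hPA c) (hPnn c)
    · exact le_antisymm (by rw [← h']; exact hPB c) (hPnn c)
  · have h1 : ∑ c : A × B, pA c.1 * pB c.2 = 1 := by
      rw [Fintype.sum_prod_type]
      have : ∀ a : A, ∑ b : B, pA a * pB b = pA a * ∑ b : B, pB b := fun a =>
        (Finset.mul_sum _ _ _).symm
      rw [Finset.sum_congr rfl (fun a _ => this a)]
      rw [aux_sum_one W hW]
      simp only [mul_one]
      exact aux_sum_one V hV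
    have h2 : ∑ c : A × B, P c = 1 := aux_sum_one _ (hV.prodMk hW)
    rw [h1, h2]

end Aux2

section Aux3
open Real Finset MeasureTheory ProbabilityTheory

variable {Ω : Type*} [MeasurableSpace Ω] {μ : Measure Ω} [IsProbabilityMeasure μ]
variable {S T U : Type*} [Fintype S] [Fintype T] [Fintype U]
  [MeasurableSpace S] [MeasurableSingletonClass S]
  [MeasurableSpace T] [MeasurableSingletonClass T]
  [MeasurableSpace U] [MeasurableSingletonClass U]

lemma aux_submod (X : Ω → S) (Y : Ω → T) (Z : Ω → U)
    (hX : Measurable X) (hY : Measurable Y) (hZ : Measurable Z) :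
    shEntropy μ (fun ω => (X ω, Y ω, Z ω)) + shEntropy μ Y
      ≤ shEntropy μ (fun ω => (X ω, Y ω)) + shEntropy μ (fun ω => (Y ω, Z ω)) := by
  classical
  have hXY : Measurable fun ω => (X ω, Y ω) := hX.prodMk hY
  have hYZ : Measurable fun ω => (Y ω, Z ω) := hY.prodMk hZ
  have hW : Measurable fun ω => (X ω, Y ω, Z ω) := hX.prodMk hYZ
  let P : S × T × U → ℝ := fun c => (μ ((fun ω => (X ω, Y ω, Z ω)) ⁻¹' {c})).toReal
  let pXY : S × T → ℝ := fun c => (μ ((fun ω => (X ω, Y ω)) ⁻¹' {c})).toReal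
  let pYZ : T × U → ℝ := fun c => (μ ((fun ω => (Y ω, Z ω)) ⁻¹' {c})).toReal
  let pY : T → ℝ := fun t => (μ (Y ⁻¹' {t})).toReal
  let Q : S × T × U → ℝ := fun c => pXY (c.1, c.2.1) * pYZ c.2 / pY c.2.1
  have hPnn : ∀ c, 0 ≤ P c := fun c => ENNReal.toReal_nonneg
  have hQnn : ∀ c, 0 ≤ Q c := fun c =>
    div_nonneg (mul_nonneg ENNReal.toReal_nonneg ENNReal.toReal_nonneg) ENNReal.toReal_nonneg
  have hsub : ∀ (c : S × T × U) (E : Set Ω),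
      ((fun ω => (X ω, Y ω, Z ω)) ⁻¹' {c}) ⊆ E → P c ≤ (μ E).toReal := by
    intro c E hE
    exact ENNReal.toReal_mono (measure_ne_top μ _) (measure_mono hE)
  have hPXY : ∀ c : S × T × U, P c ≤ pXY (c.1, c.2.1) := by
    rintro ⟨s, t, u⟩
    refine hsub _ _ ?_
    intro ω h
    simp only [Set.mem_preimage, Set.mem_singleton_iff, Prod.mk.injEq] at h ⊢
    exact ⟨h.1, h.2.1⟩
  have hPYZ : ∀ c : S × T × U, P c ≤ pYZ c.2 := by
    rintro ⟨s, t, u⟩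
    refine hsub _ _ ?_
    intro ω h
    simp only [Set.mem_preimage, Set.mem_singleton_iff, Prod.mk.injEq] at h ⊢
    exact h.2
  have hPY : ∀ c : S × T × U, P c ≤ pY c.2.1 := by
    rintro ⟨s, t, u⟩
    refine hsub _ _ ?_
    intro ω h
    simp only [Set.mem_preimage, Set.mem_singleton_iff, Prod.mk.injEq] at h ⊢
    exact h.2.1
  -- marginals
  have hmargXY : ∀ s t, ∑ u : U, P (s, t, u) = pXY (s, t) := by
    intro s t
    show ∑ u : U, (μ ((fun ω => (X ω, Y ω, Z ω)) ⁻¹' {(s, t, u)})).toReal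
        = (μ ((fun ω => (X ω, Y ω)) ⁻¹' {(s, t)})).toReal
    rw [aux_marg_fst (μ := μ) (fun ω => (X ω, Y ω)) Z hXY hZ (s, t)]
    refine Finset.sum_congr rfl fun u _ => ?_
    have hset : ((fun ω => ((X ω, Y ω), Z ω)) ⁻¹' {((s, t), u)})
        = ((fun ω => (X ω, Y ω, Z ω)) ⁻¹' {(s, t, u)}) := by
      ext ω
      simp only [Set.mem_preimage, Set.mem_singleton_iff, Prod.mk.injEq]
      tauto
    rw [hset]
  have hmargYZ : ∀ c : T × U, ∑ s : S, P (s, c) = pYZ c := by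
    intro c
    show ∑ s : S, (μ ((fun ω => (X ω, Y ω, Z ω)) ⁻¹' {(s, c)})).toReal
        = (μ ((fun ω => (Y ω, Z ω)) ⁻¹' {c})).toReal
    rw [aux_marg_snd (μ := μ) X (fun ω => (Y ω, Z ω)) hX hYZ c]
  have hmargTU : ∀ t, ∑ u : U, pYZ (t, u) = pY t := by
    intro t
    exact (aux_marg_fst (μ := μ) Y Z hY hZ t).symm
  have hmargST : ∀ t, ∑ s : S, pXY (s, t) = pY t := by
    intro t
    exact (aux_marg_snd (μ := μ) X Y hX hY t).symm
  -- Gibbs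
  have key := aux_gibbs Finset.univ P Q (fun c _ => hPnn c) (fun c _ => hQnn c) ?_ ?_
  · -- rewrite RHS of Gibbs
    have hsplit : ∀ c : S × T × U, -(P c * log (Q c))
        = -(P c * log (pXY (c.1, c.2.1))) + -(P c * log (pYZ c.2)) + P c * log (pY c.2.1) := by
      intro c
      rcases eq_or_lt_of_le (hPnn c) with h | h
      · simp [← h]
      · have h1 : 0 < pXY (c.1, c.2.1) := lt_of_lt_of_le h (hPXY c)
        have h2 : 0 < pYZ c.2 := lt_of_lt_of_le h (hPYZ c)
        have h3 : 0 < pY c.2.1 := lt_of_lt_of_le h (hPY c)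
        show -(P c * log (pXY (c.1, c.2.1) * pYZ c.2 / pY c.2.1)) = _
        rw [Real.log_div (mul_ne_zero h1.ne' h2.ne') h3.ne', Real.log_mul h1.ne' h2.ne']
        ring
    rw [Finset.sum_congr rfl (fun c _ => hsplit c)] at key
    rw [Finset.sum_add_distrib, Finset.sum_add_distrib] at key
    -- sum 1 : H(X,Y)
    have e1 : ∑ c : S × T × U, -(P c * log (pXY (c.1, c.2.1)))
        = shEntropy μ (fun ω => (X ω, Y ω)) := by
      rw [Fintype.sum_prod_type]
      have h1 : ∀ s : S, ∑ c : T × U, -(P (s, c) * log (pXY ((s, c).1, (s, c).2.1)))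
          = ∑ t : T, negMulLog (pXY (s, t)) := by
        intro s
        rw [Fintype.sum_prod_type]
        refine Finset.sum_congr rfl fun t _ => ?_
        have : ∀ u : U, -(P (s, t, u) * log (pXY ((s, (t, u)).1, (s, (t, u)).2.1)))
            = -(P (s, t, u) * log (pXY (s, t))) := fun u => rfl
        rw [Finset.sum_congr rfl fun u _ => this u, Finset.sum_neg_distrib, ← Finset.sum_mul,
          hmargXY s t, negMulLog, neg_mul]
      rw [Finset.sum_congr rfl fun s _ => h1 s]
      show _ = ∑ c : S × T, negMulLog (pXY c)
      rw [Fintype.sum_prod_type]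
    -- sum 2 : H(Y,Z)
    have e2 : ∑ c : S × T × U, -(P c * log (pYZ c.2))
        = shEntropy μ (fun ω => (Y ω, Z ω)) := by
      rw [Fintype.sum_prod_type, Finset.sum_comm]
      show ∑ c : T × U, ∑ s : S, -(P (s, c) * log (pYZ c)) = ∑ c : T × U, negMulLog (pYZ c)
      refine Finset.sum_congr rfl fun c _ => ?_
      rw [Finset.sum_neg_distrib, ← Finset.sum_mul, hmargYZ c, negMulLog, neg_mul]
    -- sum 3 : -H(Y)
    have e3 : ∑ c : S × T × U, P c * log (pY c.2.1) = - shEntropy μ Y := by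
      rw [Fintype.sum_prod_type, Finset.sum_comm]
      have h1 : ∀ c : T × U, ∑ s : S, P (s, c) * log (pY c.1) = pYZ c * log (pY c.1) := by
        intro c
        rw [← Finset.sum_mul, hmargYZ c]
      show ∑ c : T × U, ∑ s : S, P (s, c) * log (pY c.1) = _
      rw [Finset.sum_congr rfl fun c _ => h1 c, Fintype.sum_prod_type]
      have h2 : ∀ t : T, ∑ u : U, pYZ (t, u) * log (pY t) = pY t * log (pY t) := by
        intro t
        rw [← Finset.sum_mul, hmargTU t]
      rw [Finset.sum_congr rfl fun t _ => h2 t]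
      show _ = - ∑ t : T, negMulLog (pY t)
      rw [← Finset.sum_neg_distrib]
      refine Finset.sum_congr rfl fun t _ => ?_
      rw [negMulLog, neg_mul, neg_neg]
    rw [e1, e2, e3] at key
    have hLHS : ∑ c : S × T × U, negMulLog (P c)
        = shEntropy μ (fun ω => (X ω, Y ω, Z ω)) := rfl
    rw [hLHS] at key
    linarith
  · -- Q = 0 → P = 0
    intro c _ h
    have h' : pXY (c.1, c.2.1) * pYZ c.2 / pY c.2.1 = 0 := h
    rcases div_eq_zero_iff.1 h' with h'' | h''
    · rcases mul_eq_zero.1 h'' with h3 | h3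
      · exact le_antisymm (h3 ▸ hPXY c) (hPnn c)
      · exact le_antisymm (h3 ▸ hPYZ c) (hPnn c)
    · exact le_antisymm (h'' ▸ hPY c) (hPnn c)
  · -- sums
    have hQsum : ∑ c : S × T × U, Q c = 1 := by
      rw [Fintype.sum_prod_type]
      have h1 : ∀ s : S, ∑ c : T × U, Q (s, c) = ∑ t : T, pXY (s, t) * (pY t / pY t) := by
        intro s
        rw [Fintype.sum_prod_type]
        refine Finset.sum_congr rfl fun t _ => ?_
        have : ∀ u : U, Q (s, t, u) = pXY (s, t) * pYZ (t, u) / pY t := fun u => rfl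
        rw [Finset.sum_congr rfl fun u _ => this u]
        calc ∑ u : U, pXY (s, t) * pYZ (t, u) / pY t
            = (∑ u : U, pXY (s, t) * pYZ (t, u)) / pY t := by rw [Finset.sum_div]
          _ = pXY (s, t) * (∑ u : U, pYZ (t, u)) / pY t := by rw [Finset.mul_sum]
          _ = pXY (s, t) * pY t / pY t := by rw [hmargTU t]
          _ = pXY (s, t) * (pY t / pY t) := by rw [mul_div_assoc]
      rw [Finset.sum_congr rfl fun s _ => h1 s, Finset.sum_comm]
      have h2 : ∀ t : T, ∑ s : S, pXY (s, t) * (pY t / pY t) = pY t := by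
        intro t
        rw [← Finset.sum_mul, hmargST t]
        rcases eq_or_ne (pY t) 0 with h | h
        · simp [h]
        · rw [div_self h, mul_one]
      rw [Finset.sum_congr rfl fun t _ => h2 t]
      exact aux_sum_one Y hY
    have hPsum : ∑ c : S × T × U, P c = 1 := aux_sum_one _ hW
    rw [hQsum, hPsum]

end Aux3

section Aux4
open Real Finset

lemma aux_tri_half (x y z axy ayx axz azx ayz azy : ℝ)
    (hx : 0 < x) (hy : 0 < y) (hz : 0 < z)
    (haxy : 0 ≤ axy) (hayx : 0 ≤ ayx) (haxz : 0 ≤ axz) (hazx : 0 ≤ azx)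
    (hayz : 0 ≤ ayz) (hazy : 0 ≤ azy)
    (hdxy : axy - ayx = x - y) (hdxz : axz - azx = x - z) (hdyz : ayz - azy = y - z)
    (hbxz : axz ≤ x)
    (t1 : axz ≤ axy + ayz)
    (hzx : z ≤ x) :
    max axz azx / max x z ≤ max axy ayx / max x y + max ayz azy / max y z := by
  rw [max_eq_left hzx, max_eq_left (by linarith : azx ≤ axz)]
  rcases le_total y x with hyx | hxy'
  · rw [max_eq_left hyx, max_eq_left (by linarith : ayx ≤ axy)]
    rcases le_total y z with hyz' | hzy'
    · rw [max_eq_right hyz', max_eq_right (by linarith : ayz ≤ azy)]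
      calc axz / x ≤ (axy + ayz) / x := by gcongr
        _ = axy / x + ayz / x := add_div _ _ _
        _ ≤ axy / x + azy / z := by gcongr <;> linarith
    · rw [max_eq_left hzy', max_eq_left (by linarith : azy ≤ ayz)]
      calc axz / x ≤ (axy + ayz) / x := by gcongr
        _ = axy / x + ayz / x := add_div _ _ _
        _ ≤ axy / x + ayz / y := by gcongr
  · rw [max_eq_right hxy', max_eq_right (by linarith : axy ≤ ayx),
      max_eq_left (by linarith : z ≤ y), max_eq_left (by linarith : azy ≤ ayz)]
    rcases le_total y (ayx + ayz) with hA | hA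
    · calc axz / x ≤ 1 := div_le_one_of_le₀ hbxz hx.le
        _ ≤ (ayx + ayz) / y := by rw [le_div_iff₀ hy]; linarith
        _ = ayx / y + ayz / y := add_div _ _ _
    · have key : axz * y ≤ (ayx + ayz) * x := by
        nlinarith [mul_nonneg (sub_nonneg.2 hA) (sub_nonneg.2 hxy')]
      have h2 : axz / x ≤ (ayx + ayz) / y := by
        rw [div_le_div_iff₀ hx hy]; linarith
      calc axz / x ≤ (ayx + ayz) / y := h2
        _ = ayx / y + ayz / y := add_div _ _ _

lemma aux_tri_arith (x y z axy ayx axz azx ayz azy : ℝ)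
    (hx : 0 < x) (hy : 0 < y) (hz : 0 < z)
    (haxy : 0 ≤ axy) (hayx : 0 ≤ ayx) (haxz : 0 ≤ axz) (hazx : 0 ≤ azx)
    (hayz : 0 ≤ ayz) (hazy : 0 ≤ azy)
    (hdxy : axy - ayx = x - y) (hdxz : axz - azx = x - z) (hdyz : ayz - azy = y - z)
    (hbxz : axz ≤ x) (hbzx : azx ≤ z)
    (t1 : axz ≤ axy + ayz) (t2 : azx ≤ azy + ayx) :
    max axz azx / max x z ≤ max axy ayx / max x y + max ayz azy / max y z := by
  rcases le_total z x with h | h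
  · exact aux_tri_half x y z axy ayx axz azx ayz azy hx hy hz haxy hayx haxz hazx hayz hazy
      hdxy hdxz hdyz hbxz t1 h
  · have := aux_tri_half z y x azy ayz azx axz ayx axy hz hy hx hazy hayz hazx haxz hayx haxy
      (by linarith) (by linarith) (by linarith) hbzx t2 h
    rw [max_comm azx axz, max_comm z x, max_comm azy ayz, max_comm z y,
      max_comm ayx axy, max_comm y x] at this
    linarith

lemma aux_formula (x y h : ℝ) (hx : 0 < x) (hy : 0 < y) :
    1 - (x + y - h) / max x y = max (h - y) (h - x) / max x y := by
  rcases le_total x y with hle | hle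
  · rw [max_eq_right hle, max_eq_right (by linarith : h - y ≤ h - x)]
    field_simp
    ring
  · rw [max_eq_left hle, max_eq_left (by linarith : h - x ≤ h - y)]
    field_simp
    ring

end Aux4

/-- Theorem 2: `D'(X,Y) = 1 - I(X,Y)/max{H(X),H(Y)}` is a (normalized) pseudometric on
random variables with positive entropies: it is nonnegative, vanishes on the diagonal,
is symmetric, is bounded by `1`, satisfies the triangle inequality, and equals
`max{H(X|Y),H(Y|X)} / max{H(X),H(Y)}`. -/
theorem normDist'_pseudometric {Ω : Type*} [MeasurableSpace Ω] (μ : Measure Ω)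
    [IsProbabilityMeasure μ]
    {S T U : Type*} [Fintype S] [Fintype T] [Fintype U]
    [MeasurableSpace S] [MeasurableSingletonClass S]
    [MeasurableSpace T] [MeasurableSingletonClass T]
    [MeasurableSpace U] [MeasurableSingletonClass U]
    (X : Ω → S) (Y : Ω → T) (Z : Ω → U)
    (hX : Measurable X) (hY : Measurable Y) (hZ : Measurable Z)
    (hHX : 0 < shEntropy μ X) (hHY : 0 < shEntropy μ Y) (hHZ : 0 < shEntropy μ Z) :
    0 ≤ normDist' μ X Y
    ∧ normDist' μ X X = 0
    ∧ normDist' μ X Y = normDist' μ Y X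
    ∧ normDist' μ X Y ≤ 1
    ∧ normDist' μ X Z ≤ normDist' μ X Y + normDist' μ Y Z
    ∧ normDist' μ X Y
        = max (shCondEntropy μ X Y) (shCondEntropy μ Y X)
          / max (shEntropy μ X) (shEntropy μ Y) := by
  classical
  set x := shEntropy μ X with hxdef
  set y := shEntropy μ Y with hydef
  set z := shEntropy μ Z with hzdef
  set hxy := shEntropy μ (fun ω => (X ω, Y ω)) with hxydef
  set hyz := shEntropy μ (fun ω => (Y ω, Z ω)) with hyzdef
  set hxz := shEntropy μ (fun ω => (X ω, Z ω)) with hxzdef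
  -- subadditivity
  have sub_xy : hxy ≤ x + y := aux_pair_le X Y hX hY
  have sub_yz : hyz ≤ y + z := aux_pair_le Y Z hY hZ
  have sub_xz : hxz ≤ x + z := aux_pair_le X Z hX hZ
  -- monotonicity
  have mono_x_xy : x ≤ hxy := aux_comp_le (fun ω => (X ω, Y ω)) (hX.prodMk hY) Prod.fst
  have mono_y_xy : y ≤ hxy := aux_comp_le (fun ω => (X ω, Y ω)) (hX.prodMk hY) Prod.snd
  have mono_y_yz : y ≤ hyz := aux_comp_le (fun ω => (Y ω, Z ω)) (hY.prodMk hZ) Prod.fst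
  have mono_z_yz : z ≤ hyz := aux_comp_le (fun ω => (Y ω, Z ω)) (hY.prodMk hZ) Prod.snd
  have mono_x_xz : x ≤ hxz := aux_comp_le (fun ω => (X ω, Z ω)) (hX.prodMk hZ) Prod.fst
  have mono_z_xz : z ≤ hxz := aux_comp_le (fun ω => (X ω, Z ω)) (hX.prodMk hZ) Prod.snd
  -- symmetry of the pair entropy
  have hcomm : shEntropy μ (fun ω => (Y ω, X ω)) = hxy :=
    le_antisymm (aux_comp_le (fun ω => (X ω, Y ω)) (hX.prodMk hY) Prod.swap)
      (aux_comp_le (fun ω => (Y ω, X ω)) (hY.prodMk hX) Prod.swap)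
  -- diagonal
  have hdiag : shEntropy μ (fun ω => (X ω, X ω)) = x :=
    le_antisymm (aux_comp_le X hX (fun s => (s, s)))
      (aux_comp_le (fun ω => (X ω, X ω)) (hX.prodMk hX) Prod.fst)
  -- triangle for pair entropies
  have htri : hxz + y ≤ hxy + hyz := by
    have h1 := aux_submod (μ := μ) X Y Z hX hY hZ
    have h2 : hxz ≤ shEntropy μ (fun ω => (X ω, Y ω, Z ω)) :=
      aux_comp_le (fun ω => (X ω, Y ω, Z ω)) (hX.prodMk (hY.prodMk hZ))
        (fun c => (c.1, c.2.2))
    linarith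
  -- key formulas
  have fxy : normDist' μ X Y = max (hxy - y) (hxy - x) / max x y := by
    unfold normDist' shMI
    rw [← hxdef, ← hydef, ← hxydef]
    exact aux_formula x y hxy hHX hHY
  have fyz : normDist' μ Y Z = max (hyz - z) (hyz - y) / max y z := by
    unfold normDist' shMI
    rw [← hydef, ← hzdef, ← hyzdef]
    exact aux_formula y z hyz hHY hHZ
  have fxz : normDist' μ X Z = max (hxz - z) (hxz - x) / max x z := by
    unfold normDist' shMI
    rw [← hxdef, ← hzdef, ← hxzdef]
    exact aux_formula x z hxz hHX hHZ
  have hMxy : 0 < max x y := lt_max_of_lt_left hHX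
  refine ⟨?_, ?_, ?_, ?_, ?_, ?_⟩
  · -- nonneg
    rw [fxy]
    exact div_nonneg (le_trans (by linarith) (le_max_left _ _)) hMxy.le
  · -- diagonal
    unfold normDist' shMI
    rw [← hxdef, hdiag, max_self]
    have : x + x - x = x := by ring
    rw [this, div_self hHX.ne']
    ring
  · -- symmetry
    unfold normDist' shMI
    rw [← hxdef, ← hydef, ← hxydef, hcomm, max_comm y x]
    ring_nf
  · -- ≤ 1
    unfold normDist' shMI
    rw [← hxdef, ← hydef, ← hxydef]
    have : 0 ≤ (x + y - hxy) / max x y := div_nonneg (by linarith) hMxy.le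
    linarith
  · -- triangle
    rw [fxy, fyz, fxz]
    exact aux_tri_arith x y z (hxy - y) (hxy - x) (hxz - z) (hxz - x) (hyz - z) (hyz - y)
      hHX hHY hHZ (by linarith) (by linarith) (by linarith) (by linarith) (by linarith)
      (by linarith) (by ring) (by ring) (by ring) (by linarith) (by linarith)
      (by linarith) (by linarith)
  · -- formula
    rw [fxy]
    unfold shCondEntropy
    rw [← hydef, ← hxdef, ← hxydef, hcomm]
end

section
/- Let X and Y be random variables taking finitely many values on a common probability space with H(X) > 0 and H(Y) > 0, and let W = (X,Y) be the joint random variable. Then for the distance D' one has only the inequalities D'(X,Y) ≤ D'(X,W) + D'(W,Y) ≤ D(X,Y). -/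
open MeasureTheory ProbabilityTheory

namespace NormDistAux

lemma negMulLog_sum_le {ι : Type*} (s : Finset ι) (f : ι → ℝ) (hf : ∀ i ∈ s, 0 ≤ f i) :
    Real.negMulLog (∑ i ∈ s, f i) ≤ ∑ i ∈ s, Real.negMulLog (f i) := by
  have key : Real.negMulLog (∑ i ∈ s, f i)
      = ∑ i ∈ s, (-(f i) * Real.log (∑ j ∈ s, f j)) := by
    rw [Real.negMulLog, ← Finset.sum_mul, ← Finset.sum_neg_distrib]
  rw [key]
  refine Finset.sum_le_sum ?_
  intro i hi
  rcases eq_or_lt_of_le (hf i hi) with h0 | h0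
  · simp [← h0]
  · have hle : f i ≤ ∑ j ∈ s, f j := Finset.single_le_sum hf hi
    have : Real.log (f i) ≤ Real.log (∑ j ∈ s, f j) := Real.log_le_log h0 hle
    rw [Real.negMulLog, neg_mul, neg_mul]
    nlinarith

lemma gibbs {S T : Type*} [Fintype S] [Fintype T] (p : S → T → ℝ)
    (hp : ∀ s t, 0 ≤ p s t) (hsum : ∑ s, ∑ t, p s t = 1) :
    ∑ s, ∑ t, Real.negMulLog (p s t)
      ≤ ∑ s, Real.negMulLog (∑ t, p s t) + ∑ t, Real.negMulLog (∑ s, p s t) := by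
  set q : S → ℝ := fun s => ∑ t, p s t with hq
  set r : T → ℝ := fun t => ∑ s, p s t with hr
  have hq0 : ∀ s, 0 ≤ q s := fun s => Finset.sum_nonneg fun t _ => hp s t
  have hr0 : ∀ t, 0 ≤ r t := fun t => Finset.sum_nonneg fun s _ => hp s t
  have hqs : ∑ s, q s = 1 := hsum
  have hrs : ∑ t, r t = 1 := by rw [hr]; rw [Finset.sum_comm]; exact hsum
  have e1 : ∑ s, Real.negMulLog (q s)
      = ∑ s, ∑ t, (-(p s t) * Real.log (q s)) := by
    refine Finset.sum_congr rfl fun s _ => ?_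
    rw [Real.negMulLog, ← Finset.sum_mul, ← Finset.sum_neg_distrib]
  have e2 : ∑ t, Real.negMulLog (r t)
      = ∑ s, ∑ t, (-(p s t) * Real.log (r t)) := by
    rw [Finset.sum_comm]
    refine Finset.sum_congr rfl fun t _ => ?_
    rw [Real.negMulLog, ← Finset.sum_mul, ← Finset.sum_neg_distrib]
  have key : ∀ s t, Real.negMulLog (p s t)
      - (-(p s t) * Real.log (q s) + -(p s t) * Real.log (r t)) ≤ q s * r t - p s t := by
    intro s t
    rcases eq_or_lt_of_le (hp s t) with h0 | h0
    · simp [← h0]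
      exact mul_nonneg (hq0 s) (hr0 t)
    · have hqpos : 0 < q s := lt_of_lt_of_le h0 (Finset.single_le_sum (fun t _ => hp s t) (Finset.mem_univ t))
      have hrpos : 0 < r t := lt_of_lt_of_le h0 (Finset.single_le_sum (fun s _ => hp s t) (Finset.mem_univ s))
      have hlog : Real.log (q s * r t / p s t) ≤ q s * r t / p s t - 1 :=
        Real.log_le_sub_one_of_pos (by positivity)
      have hexp : Real.log (q s * r t / p s t)
          = Real.log (q s) + Real.log (r t) - Real.log (p s t) := by
        rw [Real.log_div (by positivity) (ne_of_gt h0), Real.log_mul (ne_of_gt hqpos) (ne_of_gt hrpos)]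
      have hmul : p s t * (q s * r t / p s t) = q s * r t := by field_simp
      have := mul_le_mul_of_nonneg_left hlog (le_of_lt h0)
      rw [hexp] at this
      rw [Real.negMulLog]
      nlinarith
  have hsum2 : ∑ s, ∑ t, (Real.negMulLog (p s t)
      - (-(p s t) * Real.log (q s) + -(p s t) * Real.log (r t)))
      ≤ ∑ s, ∑ t, (q s * r t - p s t) := by
    refine Finset.sum_le_sum fun s _ => Finset.sum_le_sum fun t _ => key s t
  have hzero : ∑ s, ∑ t, (q s * r t - p s t) = 0 := by
    simp only [Finset.sum_sub_distrib, ← Finset.mul_sum, ← Finset.sum_mul]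
    rw [hqs, hrs]
    norm_num
  rw [hzero] at hsum2
  simp only [Finset.sum_sub_distrib, Finset.sum_add_distrib] at hsum2
  rw [e1, e2]
  linarith

lemma shEntropy_comp_inj {Ω U V : Type*} [MeasurableSpace Ω] (μ : Measure Ω)
    [Fintype U] [Fintype V] [DecidableEq V] (Z : Ω → U) (F : U → V) (hF : Function.Injective F) :
    shEntropy μ (fun ω => F (Z ω)) = shEntropy μ Z := by
  unfold shEntropy
  rw [← Finset.sum_subset (Finset.subset_univ (Finset.univ.image F))
    (by
      intro v _ hv
      have : (fun ω => F (Z ω)) ⁻¹' {v} = ∅ := by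
        ext ω
        simp only [Set.mem_preimage, Set.mem_singleton_iff, Set.mem_empty_iff_false, iff_false]
        intro h
        exact hv (Finset.mem_image.2 ⟨Z ω, Finset.mem_univ _, h⟩)
      simp [this]),
    Finset.sum_image (fun a _ b _ h => hF h)]
  refine Finset.sum_congr rfl fun u _ => ?_
  congr 1
  have : (fun ω => F (Z ω)) ⁻¹' {F u} = Z ⁻¹' {u} := by
    ext ω; simp [hF.eq_iff]
  rw [this]

lemma measure_marginal_fst {Ω S T : Type*} [MeasurableSpace Ω] (μ : Measure Ω)
    [Fintype T] [MeasurableSpace S] [MeasurableSingletonClass S]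
    [MeasurableSpace T] [MeasurableSingletonClass T]
    (X : Ω → S) (Y : Ω → T) (hX : Measurable X) (hY : Measurable Y) (s : S) :
    μ (X ⁻¹' {s}) = ∑ t : T, μ ((fun ω => (X ω, Y ω)) ⁻¹' {(s, t)}) := by
  have hset : ∀ (a : S) (b : T),
      (fun ω => (X ω, Y ω)) ⁻¹' {(a, b)} = X ⁻¹' {a} ∩ Y ⁻¹' {b} := by
    intro a b; ext ω; simp [Prod.ext_iff]
  have hun : X ⁻¹' {s} = ⋃ t : T, (fun ω => (X ω, Y ω)) ⁻¹' {(s, t)} := by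
    ext ω; simp [Prod.ext_iff]
  rw [hun, measure_iUnion ?_ ?_, tsum_fintype]
  · intro t t' htt'
    rw [Function.onFun, hset, hset]
    refine Set.disjoint_left.2 fun ω h1 h2 => ?_
    exact htt' (by
      have := h1.2; have := h2.2
      simp only [Set.mem_preimage, Set.mem_singleton_iff] at *
      rw [← h1.2, ← h2.2])
  · intro t
    rw [hset]
    exact (hX (measurableSet_singleton s)).inter (hY (measurableSet_singleton t))

end NormDistAux

/-- For `W = (X,Y)` one has only the inequalities
`D'(X,Y) ≤ D'(X,W) + D'(W,Y) ≤ D(X,Y)`. -/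
theorem normDist'_midpoint_ineq {Ω : Type*} [MeasurableSpace Ω] (μ : Measure Ω)
    [IsProbabilityMeasure μ]
    {S T : Type*} [Fintype S] [Fintype T]
    [MeasurableSpace S] [MeasurableSingletonClass S]
    [MeasurableSpace T] [MeasurableSingletonClass T]
    (X : Ω → S) (Y : Ω → T) (hX : Measurable X) (hY : Measurable Y)
    (hHX : 0 < shEntropy μ X) (hHY : 0 < shEntropy μ Y) :
    normDist' μ X Y
        ≤ normDist' μ X (fun ω => (X ω, Y ω)) + normDist' μ (fun ω => (X ω, Y ω)) Y
    ∧ normDist' μ X (fun ω => (X ω, Y ω)) + normDist' μ (fun ω => (X ω, Y ω)) Y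
        ≤ normDist μ X Y := by

  classical
  set W : Ω → S × T := fun ω => (X ω, Y ω) with hWdef
  set p : S → T → ℝ := fun s t => (μ (W ⁻¹' {(s, t)})).toReal with hpdef
  have hp : ∀ s t, 0 ≤ p s t := fun s t => ENNReal.toReal_nonneg
  -- marginals
  have hq : ∀ s : S, (μ (X ⁻¹' {s})).toReal = ∑ t, p s t := by
    intro s
    rw [NormDistAux.measure_marginal_fst μ X Y hX hY s,
      ENNReal.toReal_sum (fun t _ => measure_ne_top μ _)]
  have hr : ∀ t : T, (μ (Y ⁻¹' {t})).toReal = ∑ s, p s t := by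
    intro t
    have h := NormDistAux.measure_marginal_fst μ Y X hY hX t
    have hre : ∀ s : S, (fun ω => (Y ω, X ω)) ⁻¹' {(t, s)} = W ⁻¹' {(s, t)} := by
      intro s; ext ω; simp [hWdef, Prod.ext_iff, and_comm]
    rw [h, ENNReal.toReal_sum (fun s _ => measure_ne_top μ _)]
    exact Finset.sum_congr rfl fun s _ => by rw [hre s]
  have hsum : ∑ s, ∑ t, p s t = 1 := by
    have h1 : ∑ s : S, μ (X ⁻¹' {s}) = 1 := by
      have hun : (Set.univ : Set Ω) = ⋃ s : S, X ⁻¹' {s} := by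
        ext ω; simp
      have hdisj : Pairwise (Function.onFun Disjoint fun s : S => X ⁻¹' {s}) := by
        intro s s' hss'
        refine Set.disjoint_left.2 fun ω h1 h2 => hss' ?_
        simp only [Set.mem_preimage, Set.mem_singleton_iff] at h1 h2
        rw [← h1, ← h2]
      have := measure_iUnion hdisj (fun s => hX (measurableSet_singleton s)) (μ := μ)
      rw [← hun, measure_univ, tsum_fintype] at this
      exact this.symm
    have h2 : ∑ s : S, (μ (X ⁻¹' {s})).toReal = 1 := by
      rw [← ENNReal.toReal_sum (fun s _ => measure_ne_top μ _), h1, ENNReal.toReal_one]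
    rw [← h2]
    exact Finset.sum_congr rfl fun s _ => (hq s).symm
  -- entropies in terms of p
  have ha : shEntropy μ X = ∑ s, Real.negMulLog (∑ t, p s t) := by
    unfold shEntropy
    exact Finset.sum_congr rfl fun s _ => by rw [hq s]
  have hb : shEntropy μ Y = ∑ t, Real.negMulLog (∑ s, p s t) := by
    unfold shEntropy
    exact Finset.sum_congr rfl fun t _ => by rw [hr t]
  have hc : shEntropy μ W = ∑ s, ∑ t, Real.negMulLog (p s t) := by
    unfold shEntropy
    rw [Fintype.sum_prod_type]
  -- monotonicity
  have hac : shEntropy μ X ≤ shEntropy μ W := by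
    rw [ha, hc]
    exact Finset.sum_le_sum fun s _ =>
      NormDistAux.negMulLog_sum_le _ _ (fun t _ => hp s t)
  have hbc : shEntropy μ Y ≤ shEntropy μ W := by
    rw [hb, hc, Finset.sum_comm]
    exact Finset.sum_le_sum fun t _ =>
      NormDistAux.negMulLog_sum_le _ _ (fun s _ => hp s t)
  -- subadditivity
  have hsub : shEntropy μ W ≤ shEntropy μ X + shEntropy μ Y := by
    rw [ha, hb, hc]
    exact NormDistAux.gibbs p hp hsum
  -- entropy of (X,W) and (W,Y)
  have hXW : shEntropy μ (fun ω => (X ω, W ω)) = shEntropy μ W := by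
    exact NormDistAux.shEntropy_comp_inj μ W (fun w => (w.1, w))
      (fun a b h => (Prod.ext_iff.1 h).2)
  have hWY : shEntropy μ (fun ω => (W ω, Y ω)) = shEntropy μ W := by
    exact NormDistAux.shEntropy_comp_inj μ W (fun w => (w, w.2))
      (fun a b h => (Prod.ext_iff.1 h).1)
  -- abbreviations
  set a := shEntropy μ X with hadef
  set b := shEntropy μ Y with hbdef
  set c := shEntropy μ W with hcdef
  have hcpos : 0 < c := lt_of_lt_of_le hHX hac
  have hMpos : 0 < max a b := lt_max_of_lt_left hHX
  have hMc : max a b ≤ c := max_le hac hbc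
  have hI : 0 ≤ a + b - c := by linarith
  have hmaxac : max a c = c := max_eq_right hac
  have hmaxcb : max c b = c := max_eq_left hbc
  simp only [normDist', normDist, shMI, ← hWdef, hXW, hWY, ← hadef, ← hbdef, ← hcdef,
    hmaxac, hmaxcb]
  have e1 : a + c - c = a := by ring
  have e2 : c + b - c = b := by ring
  rw [e1, e2]
  have ediv : (a + b - c) / c = a / c + b / c - 1 := by
    field_simp
  have hdiv : (a + b - c) / c ≤ (a + b - c) / max a b := by
    gcongr
  constructor
  · linarith
  · linarith
end
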